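/- Let Σ be a p×p symmetric positive definite matrix with Cholesky decomposition Σ = L D Lᵗ, L unit lower triangular, D positive diagonal. For i ∈ {1,...,p} and j < i, the (i,j) entry of L equals the j-th component of the regression coefficient vector β_{i|J} := (Σ_{JJ})⁻¹ (Σ_{Ji}) with J = {1,...,j}. That is, l_{ij} = (Σ_{iJ} Σ_{JJ}⁻¹)_j. -/
import Mathlib


open Matrix

/-- The `(i,j)` entry of the unit lower triangular Cholesky factor `L` of
`Σ = L D Lᵗ` equals the `j`-th (last) component of the regression coefficient
vector `β_{i|J} = (Σ_{iJ} Σ_{JJ}⁻¹)ᵗ` with `J = {1,...,j}` (0-based: indices `≤ j`). -/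
theorem stmt_1 {p : ℕ} (S L D : Matrix (Fin p) (Fin p) ℝ)
    (hSsym : Sᵀ = S) (hSpd : S.PosDef)
    (hLdiag : ∀ i, L i i = 1) (hLlow : ∀ i j : Fin p, i < j → L i j = 0)
    (hDdiag : ∀ i j : Fin p, i ≠ j → D i j = 0) (hDpos : ∀ i, 0 < D i i)
    (hchol : S = L * D * Lᵀ) (i j : Fin p) (hij : j < i) :
    L i j =
      ((fun k : Fin (j + 1) => S i (Fin.castLE (by omega) k)) ᵥ*
        (S.submatrix (Fin.castLE (by omega : (j : ℕ) + 1 ≤ p))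
          (Fin.castLE (by omega)))⁻¹) (Fin.last j) := by
  have hjp : (j : ℕ) + 1 ≤ p := by omega
  set e : Fin ((j : ℕ) + 1) → Fin p := Fin.castLE hjp with he
  have einj : Function.Injective e := Fin.castLE_injective hjp
  show L i j = ((fun k : Fin ((j:ℕ) + 1) => S i (e k)) ᵥ*
      (S.submatrix e e)⁻¹) (Fin.last (j:ℕ))
  set L' : Matrix (Fin ((j:ℕ)+1)) (Fin ((j:ℕ)+1)) ℝ := L.submatrix e e with hL'
  set M : Matrix (Fin ((j:ℕ)+1)) (Fin ((j:ℕ)+1)) ℝ := S.submatrix e e with hMdef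
  set d : Fin ((j:ℕ)+1) → ℝ := fun a => D (e a) (e a) with hd
  set D' : Matrix (Fin ((j:ℕ)+1)) (Fin ((j:ℕ)+1)) ℝ := Matrix.diagonal d with hD'
  set w : Fin ((j:ℕ)+1) → ℝ := fun a => L i (e a) with hw
  -- restriction of the Cholesky sum to the leading block
  have hsum : ∀ (r : Fin p) (b : Fin ((j:ℕ)+1)),
      (L * D * Lᵀ) r (e b) = ∑ c : Fin ((j:ℕ)+1), L r (e c) * d c * L (e b) (e c) := by
    intro r b
    have h1 : (L * D * Lᵀ) r (e b) = ∑ k : Fin p, L r k * D k k * L (e b) k := by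
      simp only [Matrix.mul_apply, Matrix.transpose_apply, Finset.sum_mul]
      rw [Finset.sum_comm]
      refine Finset.sum_congr rfl fun k _ => ?_
      exact Finset.sum_eq_single k
        (fun l _ hlk => by rw [hDdiag k l (Ne.symm hlk)]; ring)
        (fun h => absurd (Finset.mem_univ k) h)
    rw [h1]
    rw [← Finset.sum_subset (Finset.subset_univ
      ((Finset.univ : Finset (Fin ((j:ℕ)+1))).map ⟨e, einj⟩))]
    · rw [Finset.sum_map]
      rfl
    · intro k _ hk
      have hk' : ∀ a : Fin ((j:ℕ)+1), e a ≠ k := by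
        intro a hak
        exact hk (Finset.mem_map.mpr ⟨a, Finset.mem_univ a, hak⟩)
      have hkj : (j : ℕ) < (k : ℕ) := by
        by_contra h
        push_neg at h
        exact hk' ⟨(k : ℕ), by omega⟩ (Fin.ext rfl)
      have hz : L (e b) k = 0 := by
        refine hLlow _ _ ?_
        simp only [Fin.lt_def]
        have hb : ((e b) : ℕ) ≤ (j : ℕ) := by
          have := b.isLt
          simp only [he, Fin.coe_castLE]
          omega
        omega
      rw [hz]; ring
  -- the leading block factors
  have hLDL : ∀ a b : Fin ((j:ℕ)+1),
      (L' * D' * L'ᵀ) a b = ∑ c : Fin ((j:ℕ)+1), L' a c * d c * L' b c := by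
    intro a b
    simp only [Matrix.mul_apply, Matrix.transpose_apply, Finset.sum_mul]
    refine Finset.sum_congr rfl fun c _ => ?_
    refine Finset.sum_eq_single c
      (fun x _ hxc => by rw [hD', Matrix.diagonal_apply_ne d hxc]; ring)
      (fun h => absurd (Finset.mem_univ c) h) |>.trans ?_
    rw [hD', Matrix.diagonal_apply_eq]
  have hM : M = L' * D' * L'ᵀ := by
    ext a b
    rw [hLDL a b, hMdef]
    simp only [Matrix.submatrix_apply]
    rw [hchol, hsum]
    rfl
  -- the row vector in the statement
  have hv : (fun k : Fin ((j:ℕ) + 1) => S i (e k)) = w ᵥ* (D' * L'ᵀ) := by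
    funext b
    rw [hchol, hsum i b]
    simp only [Matrix.vecMul, dotProduct, Matrix.mul_apply,
      Matrix.transpose_apply, Finset.mul_sum]
    refine Finset.sum_congr rfl fun c _ => ?_
    refine Eq.trans ?_ (Finset.sum_eq_single c
      (fun x _ hxc => by rw [hD', Matrix.diagonal_apply_ne d (Ne.symm hxc)]; ring)
      (fun h => absurd (Finset.mem_univ c) h)).symm
    rw [hD', Matrix.diagonal_apply_eq]
    show L i (e c) * d c * L (e b) (e c) = w c * (d c * L' b c)
    rw [hw, hL']
    simp only [Matrix.submatrix_apply]
    ring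
  -- invertibility facts
  have hL'lowtri : L'.BlockTriangular OrderDual.toDual := by
    intro a b hab
    exact hLlow (e a) (e b) hab
  have hdetL' : L'.det = 1 := by
    rw [Matrix.det_of_lowerTriangular L' hL'lowtri]
    exact Finset.prod_eq_one fun a _ => hLdiag (e a)
  have hLu : IsUnit L'.det := by rw [hdetL']; exact isUnit_one
  have hLTu : IsUnit (L'ᵀ).det := by rwa [Matrix.det_transpose]
  have hDu : IsUnit D'.det := by
    rw [hD', Matrix.det_diagonal]
    exact (Finset.prod_pos fun a _ => hDpos (e a)).ne'.isUnit
  -- invert the factorization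
  have hMinv : M⁻¹ = (L'ᵀ)⁻¹ * (D'⁻¹ * L'⁻¹) := by
    rw [hM, Matrix.mul_inv_rev, Matrix.mul_inv_rev]
  have hcancel : D' * L'ᵀ * ((L'ᵀ)⁻¹ * (D'⁻¹ * L'⁻¹)) = L'⁻¹ := by
    calc D' * L'ᵀ * ((L'ᵀ)⁻¹ * (D'⁻¹ * L'⁻¹))
        = D' * (L'ᵀ * (L'ᵀ)⁻¹) * D'⁻¹ * L'⁻¹ := by simp only [mul_assoc]
      _ = L'⁻¹ := by
          rw [Matrix.mul_nonsing_inv _ hLTu, mul_one, Matrix.mul_nonsing_inv _ hDu, one_mul]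
  have hkey : (fun k : Fin ((j:ℕ) + 1) => S i (e k)) ᵥ* M⁻¹ = w ᵥ* L'⁻¹ := by
    rw [hv, hMinv, Matrix.vecMul_vecMul, hcancel]
  -- last column of L' is the standard basis vector
  have hLcol : ∀ b : Fin ((j:ℕ)+1),
      L' b (Fin.last (j:ℕ)) = if b = Fin.last (j:ℕ) then 1 else 0 := by
    intro b
    by_cases hb : b = Fin.last (j:ℕ)
    · subst hb
      rw [if_pos rfl]
      exact hLdiag (e (Fin.last (j:ℕ)))
    · rw [if_neg hb]
      refine hLlow _ _ ?_
      have hb' : (b : ℕ) < (j : ℕ) := by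
        have h1 := b.isLt
        have h2 : (b : ℕ) ≠ (j : ℕ) := fun h => hb (Fin.ext (by simpa using h))
        omega
      simp only [he, Fin.lt_def, Fin.coe_castLE]
      simpa using hb'
  -- hence last column of L'⁻¹ is too
  have hinvcol : ∀ a : Fin ((j:ℕ)+1),
      L'⁻¹ a (Fin.last (j:ℕ)) = if a = Fin.last (j:ℕ) then 1 else 0 := by
    intro a
    have h1 := congrFun (congrFun (Matrix.nonsing_inv_mul L' hLu) a) (Fin.last (j:ℕ))
    rw [Matrix.mul_apply] at h1
    have h2 : ∑ b, L'⁻¹ a b * L' b (Fin.last (j:ℕ)) = L'⁻¹ a (Fin.last (j:ℕ)) :=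
      Finset.sum_eq_single (Fin.last (j:ℕ))
        (fun b _ hb => by rw [hLcol, if_neg hb, mul_zero])
        (fun h => absurd (Finset.mem_univ _) h) |>.trans
        (by rw [hLcol, if_pos rfl, mul_one])
    rw [h2] at h1
    rw [h1, Matrix.one_apply]
  -- conclude
  have hfinal : (w ᵥ* L'⁻¹) (Fin.last (j:ℕ)) = L i j := by
    simp only [Matrix.vecMul, dotProduct]
    refine (Finset.sum_eq_single (Fin.last (j:ℕ))
      (fun b _ hb => by rw [hinvcol, if_neg hb, mul_zero])
      (fun h => absurd (Finset.mem_univ _) h)).trans ?_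
    rw [hinvcol, if_pos rfl, mul_one, hw]
    exact congrArg (L i) (Fin.ext rfl)
  show L i j = ((fun k : Fin ((j:ℕ) + 1) => S i (e k)) ᵥ* M⁻¹) (Fin.last (j:ℕ))
  rw [hkey]
  exact hfinal.symm
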